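/- arXiv:2005.00417 — 3 statements merged into one kernel-verified Lean document; each statement's English description precedes it below -/
import Mathlib

section
/- Let H be a finite simple graph and β an integer parameter. If an edge (u,v) with deg_H(u) + deg_H(v) > β is deleted from H, then the potential Φ(H) = (β - 1/2)·∑_v deg_H(v) - ∑_{(u,v)∈E(H)}(deg_H(u)+deg_H(v)) increases by at least 1. -/
open SimpleGraph Finset
open scoped Classical

/-!
A vertex `w` lies on `d_w` edges and contributes `d_w` to the edge-degree of each, so
`Φ(H) = ∑_w ((β - 1/2)·d_w - d_w²)`. Deleting `uv` lowers `d_u` and `d_v` by one and leaves the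
other degrees alone, so `Φ` changes by `2(d_u + d_v) - 2β - 1`, which is at least `1` when
`d_u + d_v ≥ β + 1`.
-/

noncomputable def deg {V : Type*} (H : SimpleGraph V) (v : V) : ℕ :=
  (H.neighborSet v).ncard

noncomputable def edgeDeg {V : Type*} (H : SimpleGraph V) : Sym2 V → ℝ :=
  Sym2.lift ⟨fun u v => (deg H u : ℝ) + (deg H v : ℝ), fun u v => by ring⟩

/-- The potential function `Φ(H) = (β - 1/2)·∑_v deg_H(v) - ∑_{(u,v)∈E(H)} (deg_H(u)+deg_H(v))`. -/
noncomputable def Phi {V : Type*} [Fintype V] (β : ℝ) (H : SimpleGraph V) : ℝ :=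
  (β - 1/2) * ∑ v, (deg H v : ℝ) - ∑ e ∈ H.edgeFinset, edgeDeg H e

namespace SimpleGraph

variable {V : Type*} (G : SimpleGraph V)

lemma deg_eq_ncard_incidenceSet (w : V) : deg G w = (G.incidenceSet w).ncard :=
  (Nat.card_congr (G.incidenceSetEquivNeighborSet w)).symm

lemma deg_eq_degree [Fintype V] (w : V) : deg G w = G.degree w := by
  rw [deg, ← card_neighborSet_eq_degree, Set.ncard_eq_toFinset_card', Set.toFinset_card]

lemma incidenceSet_deleteEdges (s : Set (Sym2 V)) (w : V) :
    (G.deleteEdges s).incidenceSet w = G.incidenceSet w \ s := by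
  ext e
  simp only [incidenceSet, edgeSet_deleteEdges, Set.mem_sdiff, Set.mem_ofPred_eq]
  tauto

lemma deg_deleteEdges_singleton_add [Finite V] {e : Sym2 V} (he : e ∈ G.edgeSet) (w : V) :
    deg (G.deleteEdges {e}) w + (if w ∈ e then 1 else 0) = deg G w := by
  rw [deg_eq_ncard_incidenceSet, deg_eq_ncard_incidenceSet, incidenceSet_deleteEdges]
  split_ifs with hw
  · exact Set.ncard_sdiff_singleton_add_one ⟨he, hw⟩ (Set.toFinite _)
  · rw [add_zero, Set.sdiff_singleton_eq_self fun h => hw h.2]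

lemma sum_edgeFinset_sum_mem [Fintype V] {M : Type*} [AddCommMonoid M] (f : V → M) :
    ∑ e ∈ G.edgeFinset, ∑ w with w ∈ e, f w = ∑ w, G.degree w • f w := by
  rw [Finset.sum_comm' (t' := univ) (s' := fun w => G.incidenceFinset w)]
  · simp only [sum_const, card_incidenceFinset_eq_degree]
  · intro e w
    simp [incidenceFinset_eq_filter, and_comm]

lemma edgeDeg_eq_sum_mem [Fintype V] {e : Sym2 V} (he : ¬e.IsDiag) :
    edgeDeg G e = ∑ w with w ∈ e, (deg G w : ℝ) := by
  induction e with
  | h a b =>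
    have hab : a ≠ b := he
    have hfilter : ({w | w ∈ s(a, b)} : Finset V) = {a, b} := by
      ext w
      simp [Sym2.mem_iff]
    rw [hfilter, sum_pair hab]
    rfl

lemma sum_edgeDeg [Fintype V] :
    ∑ e ∈ G.edgeFinset, edgeDeg G e = ∑ w, (deg G w : ℝ) ^ 2 := by
  rw [sum_congr rfl fun e he => G.edgeDeg_eq_sum_mem (G.not_isDiag_of_mem_edgeSet
    (mem_edgeFinset.mp he)), sum_edgeFinset_sum_mem]
  simp only [← deg_eq_degree, nsmul_eq_mul, sq]

lemma Phi_eq_sum [Fintype V] (β : ℝ) :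
    Phi β G = ∑ w, ((β - 1/2) * deg G w - (deg G w : ℝ) ^ 2) := by
  rw [Phi, sum_edgeDeg, mul_sum, sum_sub_distrib]

end SimpleGraph

lemma sum_sub_sum_of_eq_sub_indicator {V : Type*} [Fintype V] (s : Finset V) (c : ℝ)
    {d d' : V → ℝ} (h : ∀ w, d' w = d w - if w ∈ s then 1 else 0) :
    ∑ w, (c * d' w - d' w ^ 2) - ∑ w, (c * d w - d w ^ 2) = ∑ w ∈ s, (2 * d w - 1 - c) := by
  rw [← sum_sub_distrib, ← univ_inter s, ← sum_ite_mem]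
  refine sum_congr rfl fun w _ => ?_
  rw [h]
  split_ifs <;> ring

/-- deleting an edge `(u,v)` with `deg_H(u) + deg_H(v) > β`
increases the potential `Φ` by at least `1`. -/
theorem stmt2 {V : Type*} [Fintype V] (H : SimpleGraph V) (β : ℤ) (u v : V)
    (huv : H.Adj u v) (hdeg : (β : ℤ) < (deg H u : ℤ) + (deg H v : ℤ)) :
    Phi (β : ℝ) H + 1 ≤ Phi (β : ℝ) (H.deleteEdges {s(u, v)}) := by
  have hdeg_deleted : ∀ w, (deg (H.deleteEdges {s(u, v)}) w : ℝ)
      = deg H w - if w ∈ ({u, v} : Finset V) then 1 else 0 := by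
    intro w
    rw [← H.deg_deleteEdges_singleton_add (H.mem_edgeSet.mpr huv) w]
    simp [Sym2.mem_iff]
  have hgain : Phi β (H.deleteEdges {s(u, v)}) - Phi β H
      = 2 * ((deg H u : ℝ) + deg H v) - 2 * β - 1 := by
    rw [Phi_eq_sum, Phi_eq_sum, sum_sub_sum_of_eq_sub_indicator _ _ hdeg_deleted,
      sum_pair huv.ne]
    ring
  have hβ : (β : ℝ) + 1 ≤ deg H u + deg H v := by exact_mod_cast hdeg
  linarith
end

section
/- Assume the 'EDCS matching lemma' as a hypothesis: for all graphs K and all parameters λ' ≤ ε/64, β' ≥ 8(λ')^{-2} log(1/λ'), every (β',λ')-EDCS J of K satisfies μ(J) ≥ (2/3 - ε)·μ(K). Then for any ε < 1/2, λ ≤ ε/128, β ≥ 16λ^{-2} log(1/λ), any graph G, any subgraph H of G with bounded edge-degree β, and X the set of all edges (u,v) ∈ G \ H with deg_H(u) + deg_H(v) < β(1-λ), it holds that μ(X ∪ H) ≥ (2/3 - ε)·μ(G). -/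
open SimpleGraph

/-- A simple graph is a matching if every vertex has at most one neighbor. -/
def IsMatchingGraph {V : Type*} (M : SimpleGraph V) : Prop :=
  ∀ u v w, M.Adj u v → M.Adj u w → v = w

/-- The maximum cardinality of a matching in `G`. -/
noncomputable def matchNum {V : Type*} (G : SimpleGraph V) : ℕ :=
  sSup {k | ∃ M : SimpleGraph V, M ≤ G ∧ IsMatchingGraph M ∧ M.edgeSet.ncard = k}

/-- `J` is a `(β', λ')`-EDCS of `K`. -/
def IsEDCS {V : Type*} (J K : SimpleGraph V) (β' lam' : ℝ) : Prop :=
  J ≤ K ∧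
  (∀ u v, J.Adj u v → (deg J u : ℝ) + (deg J v : ℝ) ≤ β') ∧
  (∀ u v, K.Adj u v → ¬ J.Adj u v → β' * (1 - lam') ≤ (deg J u : ℝ) + (deg J v : ℝ))

private lemma matchNum_bddAbove {V : Type*} [Fintype V] (G : SimpleGraph V) :
    BddAbove {k | ∃ M : SimpleGraph V, M ≤ G ∧ IsMatchingGraph M ∧ M.edgeSet.ncard = k} := by
  classical
  refine ⟨Fintype.card (Sym2 V), ?_⟩
  rintro k ⟨M, _, _, rfl⟩
  calc M.edgeSet.ncard ≤ (Set.univ : Set (Sym2 V)).ncard :=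
        Set.ncard_le_ncard (Set.subset_univ _) Set.finite_univ
    _ = Fintype.card (Sym2 V) := by simp [Set.ncard_univ]

private lemma matchNum_nonempty {V : Type*} [Fintype V] (G : SimpleGraph V) :
    {k | ∃ M : SimpleGraph V, M ≤ G ∧ IsMatchingGraph M ∧ M.edgeSet.ncard = k}.Nonempty :=
  ⟨0, ⊥, bot_le, fun _ _ _ h => h.elim, by simp⟩

private lemma matchNum_mono {V : Type*} [Fintype V] {G₁ G₂ : SimpleGraph V} (h : G₁ ≤ G₂) :
    matchNum G₁ ≤ matchNum G₂ := by
  apply csSup_le_csSup (matchNum_bddAbove G₂) (matchNum_nonempty G₁)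
  rintro k ⟨M, hM, h1, h2⟩
  exact ⟨M, hM.trans h, h1, h2⟩

private lemma deg_mono {V : Type*} [Fintype V] {G₁ G₂ : SimpleGraph V} (h : G₁ ≤ G₂) (v : V) :
    deg G₁ v ≤ deg G₂ v :=
  Set.ncard_le_ncard (fun _ hx => h hx) (Set.toFinite _)

private lemma deg_matching_le_one {V : Type*} [Fintype V] {M : SimpleGraph V}
    (hM : IsMatchingGraph M) (v : V) : deg M v ≤ 1 :=
  (Set.ncard_le_one_iff (Set.toFinite _)).2 (fun ha hb => hM v _ _ ha hb)

private lemma deg_sup_le {V : Type*} [Fintype V] (A B : SimpleGraph V) (v : V) :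
    deg (A ⊔ B) v ≤ deg A v + deg B v := by
  have : (A ⊔ B).neighborSet v = A.neighborSet v ∪ B.neighborSet v := rfl
  rw [deg, this]
  exact Set.ncard_union_le _ _

/-- assuming the EDCS matching lemma, if `H ⊆ G` has bounded edge-degree `β`
and `X` is the set of underfull edges of `G \ H`, then `μ(X ∪ H) ≥ (2/3 - ε)·μ(G)`. -/
theorem stmt7 {V : Type*} [Fintype V] (ε lam β : ℝ)
    (hε0 : 0 < ε) (hε : ε < 1 / 2) (hlam0 : 0 < lam) (hlam : lam ≤ ε / 128)
    (hβ : 16 / lam ^ 2 * Real.log (1 / lam) ≤ β)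
    (hEDCS : ∀ (K J : SimpleGraph V) (β' lam' : ℝ), 0 < lam' → lam' ≤ ε / 64 →
      8 / lam' ^ 2 * Real.log (1 / lam') ≤ β' → IsEDCS J K β' lam' →
      (2 / 3 - ε) * (matchNum K : ℝ) ≤ (matchNum J : ℝ))
    (G H X : SimpleGraph V) (hHG : H ≤ G)
    (hP1 : ∀ u v, H.Adj u v → (deg H u : ℝ) + (deg H v : ℝ) ≤ β)
    (hXG : X ≤ G)
    (hX : ∀ u v, X.Adj u v ↔
      G.Adj u v ∧ ¬ H.Adj u v ∧ (deg H u : ℝ) + (deg H v : ℝ) < β * (1 - lam)) :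
    (2 / 3 - ε) * (matchNum G : ℝ) ≤ (matchNum (X ⊔ H) : ℝ) := by
  classical
  -- basic numeric facts
  have hlam256 : lam ≤ 1 / 256 := by linarith
  have hlog1 : (1 : ℝ) ≤ Real.log (1 / lam) := by
    rw [Real.le_log_iff_exp_le (by positivity)]
    have h1 : Real.exp 1 < 2.7182818286 := Real.exp_one_lt_d9
    have h2 : (256 : ℝ) ≤ 1 / lam := by
      rw [le_div_iff₀ hlam0]; linarith
    linarith
  have hβ2 : 2 / lam ≤ β := by
    have h1 : 2 / lam ≤ 16 / lam ^ 2 := by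
      rw [div_le_div_iff₀ hlam0 (by positivity)]
      nlinarith
    calc 2 / lam ≤ 16 / lam ^ 2 := h1
      _ = 16 / lam ^ 2 * 1 := by ring
      _ ≤ 16 / lam ^ 2 * Real.log (1 / lam) := by
          apply mul_le_mul_of_nonneg_left hlog1 (by positivity)
      _ ≤ β := hβ
  have hβlam : 2 ≤ β * lam := by
    have := (div_le_iff₀ hlam0).1 hβ2
    linarith [mul_comm lam β]
  have hβ0 : 0 < β := lt_of_lt_of_le (by positivity) hβ2
  -- get a maximum matching M of G
  obtain ⟨M, hMG, hMmatch, hMcard⟩ :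
      matchNum G ∈ {k | ∃ M : SimpleGraph V, M ≤ G ∧ IsMatchingGraph M ∧ M.edgeSet.ncard = k} :=
    Nat.sSup_mem (matchNum_nonempty G) (matchNum_bddAbove G)
  set J : SimpleGraph V := H ⊔ (X ⊓ M) with hJ
  set K : SimpleGraph V := H ⊔ M with hK
  -- J is a (β+2, 2λ)-EDCS of K
  have hHJ : ∀ v, deg H v ≤ deg J v := deg_mono le_sup_left
  have hJdeg : ∀ v, (deg J v : ℝ) ≤ deg H v + 1 := by
    intro v
    have h1 : deg J v ≤ deg H v + deg (X ⊓ M) v := deg_sup_le _ _ v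
    have h2 : deg (X ⊓ M) v ≤ deg M v := deg_mono inf_le_right v
    have h3 : deg M v ≤ 1 := deg_matching_le_one hMmatch v
    have : deg J v ≤ deg H v + 1 := by omega
    exact_mod_cast this
  have hEDCSJ : IsEDCS J K (β + 2) (2 * lam) := by
    refine ⟨sup_le_sup_left inf_le_right _, ?_, ?_⟩
    · intro u v huv
      have hsum : (deg H u : ℝ) + (deg H v : ℝ) ≤ β := by
        rcases huv with h | h
        · exact hP1 u v h
        · have hx := (hX u v).1 h.1
          have : β * (1 - lam) ≤ β := by nlinarith
          linarith [hx.2.2]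
      linarith [hJdeg u, hJdeg v]
    · intro u v huv hnuv
      have hnH : ¬ H.Adj u v := fun h => hnuv (Or.inl h)
      have hM' : M.Adj u v := by
        rcases huv with h | h
        exacts [absurd h hnH, h]
      have hnX : ¬ X.Adj u v := fun h => hnuv (Or.inr ⟨h, hM'⟩)
      have hGuv : G.Adj u v := hMG hM'
      have hdeg : β * (1 - lam) ≤ (deg H u : ℝ) + (deg H v : ℝ) := by
        by_contra hc
        exact hnX ((hX u v).2 ⟨hGuv, hnH, by linarith⟩)
      have h1 : (deg H u : ℝ) ≤ deg J u := by exact_mod_cast hHJ u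
      have h2 : (deg H v : ℝ) ≤ deg J v := by exact_mod_cast hHJ v
      have key : (β + 2) * (1 - 2 * lam) ≤ β * (1 - lam) := by nlinarith
      linarith
  -- apply the hypothesis
  have hmain : (2 / 3 - ε) * (matchNum K : ℝ) ≤ (matchNum J : ℝ) := by
    apply hEDCS K J (β + 2) (2 * lam) (by linarith) (by linarith) ?_ hEDCSJ
    have hlog2 : 0 ≤ Real.log (1 / (2 * lam)) := by
      apply Real.log_nonneg
      rw [le_div_iff₀ (by positivity)]; linarith
    have hlogle : Real.log (1 / (2 * lam)) ≤ Real.log (1 / lam) := by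
      apply Real.log_le_log (by positivity)
      rw [div_le_div_iff₀ (by positivity) hlam0]; nlinarith
    have h1 : 8 / (2 * lam) ^ 2 = 2 / lam ^ 2 := by ring
    calc 8 / (2 * lam) ^ 2 * Real.log (1 / (2 * lam))
        = 2 / lam ^ 2 * Real.log (1 / (2 * lam)) := by rw [h1]
      _ ≤ 16 / lam ^ 2 * Real.log (1 / lam) := by
          apply mul_le_mul ?_ hlogle hlog2 (by positivity)
          rw [div_le_div_iff₀ (by positivity) (by positivity)]; nlinarith
      _ ≤ β := hβ
      _ ≤ β + 2 := by linarith
  -- μ(G) ≤ μ(K) and μ(J) ≤ μ(X ⊔ H)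
  have hGK : matchNum G ≤ matchNum K := by
    rw [← hMcard]
    exact le_csSup (matchNum_bddAbove K) ⟨M, le_sup_right, hMmatch, rfl⟩
  have hJXH : matchNum J ≤ matchNum (X ⊔ H) := by
    apply matchNum_mono
    exact sup_le le_sup_right ((inf_le_left).trans le_sup_left)
  have h23 : (0 : ℝ) ≤ 2 / 3 - ε := by linarith
  calc (2 / 3 - ε) * (matchNum G : ℝ) ≤ (2 / 3 - ε) * (matchNum K : ℝ) := by
        apply mul_le_mul_of_nonneg_left (by exact_mod_cast hGK) h23
    _ ≤ (matchNum J : ℝ) := hmain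
    _ ≤ (matchNum (X ⊔ H) : ℝ) := by exact_mod_cast hJXH
end

section
/- Let X_1, …, X_k be negatively associated random variables taking values in [0,1], X = ∑ X_i, μ = E[X]. Then for any 0 < δ < 1, P[X ≤ μ(1-δ)] ≤ exp(-μδ²/2). -/
/-!
For `t ≤ 0` the maps `x ↦ exp (t * x)` are antitone, so their negatives are monotone and
negative association splits `E[exp (t X)]` into `∏ E[exp (t X_i)]`, exactly as independence
would. Convexity of `exp` bounds each factor by `1 + E[X_i] (eᵗ - 1) ≤ exp (E[X_i] (eᵗ - 1))`,
and Markov's inequality at `t = log (1 - δ)` gives the exponent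
`μ (-(1 - δ) log (1 - δ) - δ)`, which is at most `-μ δ² / 2` since `x log x ≥ (x² - 1) / 2`
on `(0, 1]`.
-/

open MeasureTheory ProbabilityTheory Real

def NegAssociated {Ω ι : Type*} [MeasurableSpace Ω] (μ : Measure Ω) (X : ι → Ω → ℝ) : Prop :=
  ∀ I J : Finset ι, Disjoint I J →
    ∀ f g : (ι → ℝ) → ℝ, Monotone f → Monotone g → Measurable f → Measurable g →
      (∀ x y : ι → ℝ, (∀ i ∈ I, x i = y i) → f x = f y) →
      (∀ x y : ι → ℝ, (∀ i ∈ J, x i = y i) → g x = g y) →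
      ∫ ω, f (fun i => X i ω) * g (fun i => X i ω) ∂μ ≤
        (∫ ω, f (fun i => X i ω) ∂μ) * ∫ ω, g (fun i => X i ω) ∂μ

theorem exp_mul_le_one_sub_add_mul_exp {t x : ℝ} (hx : x ∈ Set.Icc (0 : ℝ) 1) :
    exp (t * x) ≤ 1 - x + x * exp t := by
  have h := convexOn_exp.2 (Set.mem_univ 0) (Set.mem_univ t) (sub_nonneg.2 hx.2) hx.1
    (sub_add_cancel 1 x)
  simpa only [smul_eq_mul, mul_zero, zero_add, exp_zero, mul_one, mul_comm x t] using h

theorem sq_sub_one_div_two_le_mul_log {x : ℝ} (hx0 : 0 < x) (hx1 : x ≤ 1) :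
    (x ^ 2 - 1) / 2 ≤ x * log x := by
  have hsinh : -log x ≤ sinh (-log x) := self_le_sinh_iff.2 (neg_nonneg.2 (log_nonpos hx0.le hx1))
  rw [sinh_eq, neg_neg, exp_neg, exp_log hx0] at hsinh
  have key : x * (x⁻¹ - x) = 1 - x ^ 2 := by field_simp
  nlinarith [mul_le_mul_of_nonneg_left hsinh hx0.le]

theorem mgf_le_exp_integral_mul_exp_sub_one {Ω : Type*} [MeasurableSpace Ω] {μ : Measure Ω}
    [IsProbabilityMeasure μ] {Y : Ω → ℝ} (hY : AEMeasurable Y μ)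
    (hY_mem : ∀ᵐ ω ∂μ, Y ω ∈ Set.Icc (0 : ℝ) 1) (t : ℝ) :
    mgf Y μ t ≤ exp (μ[Y] * (exp t - 1)) := by
  have hY_int : Integrable Y μ := .of_mem_Icc 0 1 hY hY_mem
  have h_one_sub : Integrable (fun ω => 1 - Y ω) μ := (integrable_const 1).sub hY_int
  calc mgf Y μ t ≤ ∫ ω, (1 - Y ω + Y ω * exp t) ∂μ := by
        refine integral_mono_ae (integrable_exp_mul_of_mem_Icc hY hY_mem)
          (h_one_sub.add (hY_int.mul_const _)) ?_
        filter_upwards [hY_mem] with ω hω using exp_mul_le_one_sub_add_mul_exp hω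
    _ = μ[Y] * (exp t - 1) + 1 := by
        rw [integral_add h_one_sub (hY_int.mul_const _), integral_sub (integrable_const 1) hY_int,
          integral_mul_const, integral_const]
        simp only [probReal_univ, smul_eq_mul, one_mul]
        ring
    _ ≤ exp (μ[Y] * (exp t - 1)) := add_one_le_exp _

/-- `exp (p * (exp t - 1))` is the mgf of a Poisson variable of mean `p`. -/
theorem measureReal_le_mul_one_sub_le_of_mgf_le {Ω : Type*} [MeasurableSpace Ω]
    {μ : Measure Ω} [IsFiniteMeasure μ] {S : Ω → ℝ} (hS : AEMeasurable S μ)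
    (hS_nonneg : ∀ᵐ ω ∂μ, 0 ≤ S ω) {p δ : ℝ} (hp : 0 ≤ p) (hδ0 : 0 ≤ δ) (hδ1 : δ < 1)
    (hmgf : ∀ t ≤ 0, mgf S μ t ≤ exp (p * (exp t - 1))) :
    μ.real {ω | S ω ≤ p * (1 - δ)} ≤ exp (-p * δ ^ 2 / 2) := by
  have h1δ : 0 < 1 - δ := by linarith
  have ht : log (1 - δ) ≤ 0 := log_nonpos h1δ.le (by linarith)
  have h_int : Integrable (fun ω => exp (log (1 - δ) * S ω)) μ := by
    refine .of_mem_Icc 0 1 (measurable_exp.comp_aemeasurable (hS.const_mul _)) ?_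
    filter_upwards [hS_nonneg] with ω hω
    exact ⟨(exp_pos _).le, exp_le_one_iff.2 (mul_nonpos_of_nonpos_of_nonneg ht hω)⟩
  have hlog := mul_le_mul_of_nonneg_left (sq_sub_one_div_two_le_mul_log h1δ (by linarith)) hp
  calc μ.real {ω | S ω ≤ p * (1 - δ)}
      ≤ exp (-log (1 - δ) * (p * (1 - δ))) * mgf S μ (log (1 - δ)) :=
        measure_le_le_exp_mul_mgf _ ht h_int
    _ ≤ exp (-log (1 - δ) * (p * (1 - δ))) * exp (p * (exp (log (1 - δ)) - 1)) := by
        gcongr; exact hmgf _ ht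
    _ = exp (-(p * ((1 - δ) * log (1 - δ))) - p * δ) := by
        rw [← exp_add, exp_log h1δ]; ring_nf
    _ ≤ exp (-p * δ ^ 2 / 2) := exp_le_exp.2 (by nlinarith)

namespace NegAssociated

variable {Ω ι : Type*} [MeasurableSpace Ω] {μ : Measure Ω} [IsProbabilityMeasure μ]
  {X : ι → Ω → ℝ}

theorem integral_prod_le_prod_integral_of_antitone (hX : NegAssociated μ X) {φ : ι → ℝ → ℝ}
    (hφ_anti : ∀ i, Antitone (φ i)) (hφ_meas : ∀ i, Measurable (φ i))
    (hφ_nonneg : ∀ i x, 0 ≤ φ i x) (s : Finset ι) :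
    ∫ ω, ∏ i ∈ s, φ i (X i ω) ∂μ ≤ ∏ i ∈ s, ∫ ω, φ i (X i ω) ∂μ := by
  classical
  induction s using Finset.induction_on with
  | empty => simp
  | insert a s ha ih =>
    have key := hX {a} s (Finset.disjoint_singleton_left.2 ha)
      (fun x => -φ a (x a)) (fun x => -∏ i ∈ s, φ i (x i))
      (fun x y hxy => neg_le_neg (hφ_anti a (hxy a)))
      (fun x y hxy => neg_le_neg <| Finset.prod_le_prod (fun i _ => hφ_nonneg i _)
        fun i _ => hφ_anti i (hxy i))
      ((hφ_meas a).comp (measurable_pi_apply a)).neg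
      (Finset.measurable_prod _ fun i _ => (hφ_meas i).comp (measurable_pi_apply i)).neg
      (fun x y h => by rw [h a (Finset.mem_singleton_self a)])
      (fun x y h => by rw [Finset.prod_congr rfl fun i hi => congrArg (φ i) (h i hi)])
    simp only [neg_mul_neg, integral_neg] at key
    simp only [Finset.prod_insert ha]
    exact key.trans (mul_le_mul_of_nonneg_left ih (integral_nonneg fun ω => hφ_nonneg a _))

theorem mgf_sum_le_prod_mgf (hX : NegAssociated μ X) {t : ℝ} (ht : t ≤ 0) (s : Finset ι) :
    mgf (fun ω => ∑ i ∈ s, X i ω) μ t ≤ ∏ i ∈ s, mgf (X i) μ t := by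
  simp only [mgf, Finset.mul_sum, exp_sum]
  exact hX.integral_prod_le_prod_integral_of_antitone
    (fun _ x y hxy => exp_le_exp.2 (mul_le_mul_of_nonpos_left hxy ht))
    (fun _ => measurable_exp.comp (measurable_const_mul t)) (fun _ _ => (exp_pos _).le) s

end NegAssociated

/-- lower-tail Chernoff bound for negatively associated random variables
`X_1, …, X_k` with values in `[0,1]`: with `X = ∑ X_i` and `μ* = E[X]`, for any
`0 < δ < 1` we have `P[X ≤ μ*(1-δ)] ≤ exp(-μ*δ²/2)`.  Negative association is stated as:
for disjoint index sets `I, J` and coordinatewise nondecreasing functions `f, g`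
depending only on the coordinates in `I` resp. `J`,
`E[f(X)·g(X)] ≤ E[f(X)]·E[g(X)]`. -/
theorem stmt19 {Ω : Type*} [MeasurableSpace Ω] (μ : Measure Ω)
    [IsProbabilityMeasure μ] (k : ℕ) (X : Fin k → Ω → ℝ)
    (hmeas : ∀ i, Measurable (X i))
    (hrange : ∀ i ω, X i ω ∈ Set.Icc (0 : ℝ) 1)
    (hNA : ∀ (I J : Finset (Fin k)), Disjoint I J →
      ∀ f g : (Fin k → ℝ) → ℝ, Monotone f → Monotone g →
        Measurable f → Measurable g →
        (∀ x y : Fin k → ℝ, (∀ i ∈ I, x i = y i) → f x = f y) →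
        (∀ x y : Fin k → ℝ, (∀ i ∈ J, x i = y i) → g x = g y) →
        ∫ ω, f (fun i => X i ω) * g (fun i => X i ω) ∂μ ≤
          (∫ ω, f (fun i => X i ω) ∂μ) * ∫ ω, g (fun i => X i ω) ∂μ)
    (δ : ℝ) (hδ0 : 0 < δ) (hδ1 : δ < 1) :
    (μ {ω | ∑ i, X i ω ≤ (∫ ω, ∑ i, X i ω ∂μ) * (1 - δ)}).toReal ≤
      Real.exp (-(∫ ω, ∑ i, X i ω ∂μ) * δ ^ 2 / 2) := by
  have hX : NegAssociated μ X := hNA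
  have hX_mem i : ∀ᵐ ω ∂μ, X i ω ∈ Set.Icc (0 : ℝ) 1 := ae_of_all _ (hrange i)
  have hsum_nonneg ω : 0 ≤ ∑ i, X i ω := Finset.sum_nonneg fun i _ => (hrange i ω).1
  have hmean : ∫ ω, ∑ i, X i ω ∂μ = ∑ i, μ[X i] :=
    integral_finsetSum _ fun i _ => .of_mem_Icc 0 1 (hmeas i).aemeasurable (hX_mem i)
  refine measureReal_le_mul_one_sub_le_of_mgf_le
    (Finset.measurable_sum _ fun i _ => hmeas i).aemeasurable (ae_of_all _ hsum_nonneg)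
    (integral_nonneg hsum_nonneg) hδ0.le hδ1 fun t ht => ?_
  calc mgf (fun ω => ∑ i, X i ω) μ t ≤ ∏ i, mgf (X i) μ t := hX.mgf_sum_le_prod_mgf ht _
    _ ≤ ∏ i, exp (μ[X i] * (exp t - 1)) :=
        Finset.prod_le_prod (fun _ _ => mgf_nonneg) fun i _ =>
          mgf_le_exp_integral_mul_exp_sub_one (hmeas i).aemeasurable (hX_mem i) t
    _ = exp ((∫ ω, ∑ i, X i ω ∂μ) * (exp t - 1)) := by
        rw [← exp_sum, ← Finset.sum_mul, hmean]
end
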